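/- Let G be an n×n symmetric real matrix. Then for all f ∈ C^∞(ℝⁿ; ℝ) and all x ∈ ℝⁿ: Γ₂^G(f)(x) = −Γ^{AG}(f)(x) + ½ Σ_{ℓ=1}^n Γ^G((σᵀ∇f)_ℓ)(x), where (σᵀ∇f)_ℓ denotes the ℓ-th component of the vector field σᵀ∇f. If moreover G is positive semidefinite, then Γ₂^G(f)(x) ≥ −Γ^{AG}(f)(x) for all f ∈ C^∞(ℝⁿ; ℝ) and all x. -/

import Mathlib

/- Setting: n×n real matrices A, σ; SDE dx = Ax dt + σ dB on ℝⁿ. -/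

open MeasureTheory Matrix

noncomputable section

abbrev Vec (n : ℕ) := Fin n → ℝ
abbrev Mat (n : ℕ) := Matrix (Fin n) (Fin n) ℝ

/-- matrix exponential e^M -/
def mexp {n : ℕ} (M : Mat n) : Mat n := NormedSpace.exp M

/-- The n×n² Kalman block matrix [σ, Aσ, A²σ, …, A^{n-1}σ]. -/
def kalmanMatrix {n : ℕ} (A σ : Mat n) : Matrix (Fin n) (Fin n × Fin n) ℝ :=
  Matrix.of fun i p => (A ^ (p.1 : ℕ) * σ) i p.2

/-- The Kalman rank condition: rank [σ, Aσ, …, A^{n-1}σ] = n. -/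
def KalmanRank {n : ℕ} (A σ : Mat n) : Prop := (kalmanMatrix A σ).rank = n

/-- Σ_t = ∫₀ᵗ e^{(t-s)A} σσᵀ e^{(t-s)Aᵀ} ds, the integral taken entrywise. -/
def SigmaMat {n : ℕ} (A σ : Mat n) (t : ℝ) : Mat n :=
  Matrix.of fun i j =>
    ∫ s in (0:ℝ)..t, (mexp ((t - s) • A) * (σ * σᵀ) * mexp ((t - s) • Aᵀ)) i j

open Classical in
/-- The positive semidefinite square root of a PSD matrix (junk value 0 otherwise). -/
def psdSqrt {n : ℕ} (M : Mat n) : Mat n := if h : M.PosSemidef then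
    h.1.eigenvectorUnitary.1 * diagonal ((↑) ∘ Real.sqrt ∘ h.1.eigenvalues) *
      (star h.1.eigenvectorUnitary : Mat n)
  else 0

/-- standard Gaussian measure on ℝⁿ -/
def stdGaussian (n : ℕ) : Measure (Vec n) :=
  Measure.pi fun _ => ProbabilityTheory.gaussianReal 0 1

/-- The Markov semigroup: P_t f(x) = 𝔼[f(e^{tA}x + Σ_t^{1/2} Z)], Z standard Gaussian. -/
def Pt {n : ℕ} (A σ : Mat n) (t : ℝ) (f : Vec n → ℝ) (x : Vec n) : ℝ :=
  ∫ z, f (mexp (t • A) *ᵥ x + psdSqrt (SigmaMat A σ t) *ᵥ z) ∂(stdGaussian n)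

/-- partial derivative ∂_i f(x) -/
def pd {n : ℕ} (i : Fin n) (f : Vec n → ℝ) (x : Vec n) : ℝ := fderiv ℝ f x (Pi.single i 1)

/-- gradient ∇f(x) -/
def gradV {n : ℕ} (f : Vec n → ℝ) (x : Vec n) : Vec n := fun i => pd i f x

/-- Γ^G(f,g)(x) = ⟨G∇f(x), ∇g(x)⟩ -/
def GammaOp {n : ℕ} (G : Mat n) (f g : Vec n → ℝ) (x : Vec n) : ℝ :=
  (G *ᵥ gradV f x) ⬝ᵥ gradV g x

/-- The generator L f(x) = ⟨Ax, ∇f(x)⟩ + ½ Σᵢⱼ (σσᵀ)ᵢⱼ ∂ᵢ∂ⱼ f(x). -/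
def Lop {n : ℕ} (A σ : Mat n) (f : Vec n → ℝ) (x : Vec n) : ℝ :=
  (A *ᵥ x) ⬝ᵥ gradV f x + (1/2) * ∑ i, ∑ j, (σ * σᵀ) i j * pd i (pd j f) x

/-- Γ₂^G(f) = ½ L Γ^G(f) − Γ^G(f, Lf). -/
def Gamma2Op {n : ℕ} (A σ G : Mat n) (f : Vec n → ℝ) (x : Vec n) : ℝ :=
  (1/2) * Lop A σ (GammaOp G f f) x - GammaOp G f (Lop A σ f) x

/-- G_t = ∫₀ᵗ e^{-vA} σσᵀ e^{-vAᵀ} dv, entrywise. -/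
def Gt {n : ℕ} (A σ : Mat n) (t : ℝ) : Mat n :=
  Matrix.of fun i j => ∫ v in (0:ℝ)..t, (mexp ((-v) • A) * (σ * σᵀ) * mexp ((-v) • Aᵀ)) i j

/-- control distance ρ_t(x,y) = √⟨G_t⁻¹(x−y), x−y⟩ -/
def rhoT {n : ℕ} (A σ : Mat n) (t : ℝ) (x y : Vec n) : ℝ :=
  Real.sqrt (((Gt A σ t)⁻¹ *ᵥ (x - y)) ⬝ᵥ (x - y))

section algebra
variable {n : ℕ}

lemma sum3_rot (F : Fin n → Fin n → Fin n → ℝ) :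
    ∑ a : Fin n, ∑ b : Fin n, ∑ c : Fin n, F a b c = ∑ b, ∑ c, ∑ a, F a b c := by
  rw [Finset.sum_comm]
  exact Finset.sum_congr rfl fun b _ => Finset.sum_comm

lemma sum4_rot (F : Fin n → Fin n → Fin n → Fin n → ℝ) :
    ∑ a : Fin n, ∑ b : Fin n, ∑ c : Fin n, ∑ d : Fin n, F a b c d
      = ∑ b, ∑ c, ∑ d, ∑ a, F a b c d := by
  rw [Finset.sum_comm]
  refine Finset.sum_congr rfl fun b _ => ?_
  rw [Finset.sum_comm]
  exact Finset.sum_congr rfl fun c _ => Finset.sum_comm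

lemma sum5_rot (F : Fin n → Fin n → Fin n → Fin n → Fin n → ℝ) :
    ∑ a : Fin n, ∑ b : Fin n, ∑ c : Fin n, ∑ d : Fin n, ∑ e : Fin n, F a b c d e
      = ∑ b, ∑ c, ∑ d, ∑ e, ∑ a, F a b c d e := by
  rw [Finset.sum_comm]
  refine Finset.sum_congr rfl fun b _ => ?_
  rw [Finset.sum_comm]
  refine Finset.sum_congr rfl fun c _ => ?_
  rw [Finset.sum_comm]
  exact Finset.sum_congr rfl fun d _ => Finset.sum_comm

lemma key_alg (G A S AG σ' : Mat n) (a P : Vec n)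
    (Q : Fin n → Fin n → ℝ) (R : Fin n → Fin n → Fin n → ℝ)
    (hG : ∀ k l, G k l = G l k)
    (hQ : ∀ k l, Q k l = Q l k)
    (hR1 : ∀ i k l, R i k l = R k i l)
    (hR2 : ∀ i k l, R i k l = R i l k)
    (hS : ∀ i j, S i j = ∑ ℓ, σ' i ℓ * σ' j ℓ)
    (hAG : ∀ l k, AG l k = ∑ m, A l m * G m k) :
    (1/2) * ((∑ i, a i * (∑ l, ∑ k, G l k * (Q i k * P l + P k * Q i l)))
        + (1/2) * ∑ i, ∑ j, S i j *
            (∑ l, ∑ k, G l k * ((R i j k * P l + Q j k * Q i l) + (Q i k * Q j l + P k * R i j l))))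
      - ∑ l, (∑ k, G l k * P k) *
          ((∑ k, (A k l * P k + a k * Q l k)) + (1/2) * ∑ i, ∑ j, S i j * R l i j)
    = - ∑ l, (∑ k, AG l k * P k) * P l
      + (1/2) * ∑ ℓ, ∑ l, (∑ k, G l k * (∑ i, σ' i ℓ * Q k i)) * (∑ j, σ' j ℓ * Q l j) := by
  have hSsym : ∀ i j, S i j = S j i := fun i j => by
    rw [hS, hS]; exact Finset.sum_congr rfl fun _ _ => mul_comm _ _
  set Ta : ℝ := ∑ i, ∑ l, ∑ k, a i * G l k * Q i k * P l with hTa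
  set Tr : ℝ := ∑ i, ∑ j, ∑ l, ∑ k, S i j * G l k * R i j k * P l with hTr
  set Tq : ℝ := ∑ i, ∑ j, ∑ l, ∑ k, S i j * G l k * Q i k * Q j l with hTq
  set TA : ℝ := ∑ l, ∑ k, ∑ m, A m l * G l k * P k * P m with hTA
  -- E1 = 2 Ta
  have hE1 : (∑ i, a i * (∑ l, ∑ k, G l k * (Q i k * P l + P k * Q i l))) = 2 * Ta := by
    have step : ∀ i : Fin n, a i * (∑ l, ∑ k, G l k * (Q i k * P l + P k * Q i l))
        = (∑ l, ∑ k, a i * G l k * Q i k * P l) + ∑ l, ∑ k, a i * G l k * P k * Q i l := by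
      intro i
      rw [Finset.mul_sum, ← Finset.sum_add_distrib]
      refine Finset.sum_congr rfl fun l _ => ?_
      rw [Finset.mul_sum, ← Finset.sum_add_distrib]
      exact Finset.sum_congr rfl fun k _ => by ring
    have swap : ∀ i : Fin n, (∑ l, ∑ k, a i * G l k * P k * Q i l)
        = ∑ l, ∑ k, a i * G l k * Q i k * P l := by
      intro i
      rw [Finset.sum_comm]
      refine Finset.sum_congr rfl fun u _ => Finset.sum_congr rfl fun v _ => ?_
      rw [hG v u]; ring
    simp only [step, swap, Finset.sum_add_distrib, hTa]; ring
  -- E2 = 2 Tr + 2 Tq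
  have hE2 : (∑ i, ∑ j, S i j *
        (∑ l, ∑ k, G l k * ((R i j k * P l + Q j k * Q i l) + (Q i k * Q j l + P k * R i j l))))
      = 2 * Tr + 2 * Tq := by
    have step : ∀ i j : Fin n, S i j *
          (∑ l, ∑ k, G l k * ((R i j k * P l + Q j k * Q i l) + (Q i k * Q j l + P k * R i j l)))
        = ((∑ l, ∑ k, S i j * G l k * R i j k * P l) + ∑ l, ∑ k, S i j * G l k * P k * R i j l)
          + ((∑ l, ∑ k, S i j * G l k * Q j k * Q i l) + ∑ l, ∑ k, S i j * G l k * Q i k * Q j l) := by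
      intro i j
      rw [Finset.mul_sum, ← Finset.sum_add_distrib, ← Finset.sum_add_distrib,
        ← Finset.sum_add_distrib]
      refine Finset.sum_congr rfl fun l _ => ?_
      rw [Finset.mul_sum, ← Finset.sum_add_distrib, ← Finset.sum_add_distrib,
        ← Finset.sum_add_distrib]
      exact Finset.sum_congr rfl fun k _ => by ring
    have swapR : ∀ i j : Fin n, (∑ l, ∑ k, S i j * G l k * P k * R i j l)
        = ∑ l, ∑ k, S i j * G l k * R i j k * P l := by
      intro i j
      rw [Finset.sum_comm]
      refine Finset.sum_congr rfl fun u _ => Finset.sum_congr rfl fun v _ => ?_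
      rw [hG v u]; ring
    have swapQ : (∑ i, ∑ j, ∑ l, ∑ k, S i j * G l k * Q j k * Q i l)
        = ∑ i, ∑ j, ∑ l, ∑ k, S i j * G l k * Q i k * Q j l := by
      rw [Finset.sum_comm]
      refine Finset.sum_congr rfl fun u _ => Finset.sum_congr rfl fun v _ =>
        Finset.sum_congr rfl fun l _ => Finset.sum_congr rfl fun k _ => ?_
      rw [hSsym v u]
    simp only [step, swapR, Finset.sum_add_distrib]
    rw [swapQ, hTr, hTq]; ring
  -- E3 = TA + Ta + (1/2) Tr
  have hE3 : (∑ l, (∑ k, G l k * P k) *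
        ((∑ k, (A k l * P k + a k * Q l k)) + (1/2) * ∑ i, ∑ j, S i j * R l i j))
      = TA + Ta + (1/2) * Tr := by
    have step : ∀ l : Fin n, (∑ k, G l k * P k) *
          ((∑ k, (A k l * P k + a k * Q l k)) + (1/2) * ∑ i, ∑ j, S i j * R l i j)
        = ((∑ k, ∑ m, A m l * G l k * P k * P m) + ∑ k, ∑ m, G l k * P k * a m * Q l m)
          + (1/2) * ∑ k, ∑ i, ∑ j, G l k * P k * S i j * R l i j := by
      intro l
      rw [mul_add]
      congr 1
      · rw [Finset.sum_mul_sum, ← Finset.sum_add_distrib]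
        refine Finset.sum_congr rfl fun k _ => ?_
        rw [← Finset.sum_add_distrib]
        exact Finset.sum_congr rfl fun m _ => by ring
      · rw [mul_left_comm]
        congr 1
        rw [Finset.sum_mul]
        refine Finset.sum_congr rfl fun k _ => ?_
        rw [Finset.mul_sum]
        refine Finset.sum_congr rfl fun i _ => ?_
        rw [Finset.mul_sum]
        exact Finset.sum_congr rfl fun j _ => by ring
    have hTa' : (∑ l, ∑ k, ∑ m, G l k * P k * a m * Q l m) = Ta := by
      conv_lhs => rw [sum3_rot, sum3_rot]
      rw [hTa]
      refine Finset.sum_congr rfl fun m _ => ?_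
      rw [Finset.sum_comm]
      refine Finset.sum_congr rfl fun u _ => Finset.sum_congr rfl fun v _ => ?_
      rw [hG v u, hQ v m]; ring
    have hTr' : (∑ l, ∑ k, ∑ i, ∑ j, G l k * P k * S i j * R l i j) = Tr := by
      conv_lhs => rw [sum4_rot, sum4_rot]
      rw [hTr]
      refine Finset.sum_congr rfl fun i _ => Finset.sum_congr rfl fun j _ => ?_
      rw [Finset.sum_comm]
      refine Finset.sum_congr rfl fun u _ => Finset.sum_congr rfl fun v _ => ?_
      rw [hG v u, hR1 v i j, hR2 i v j]; ring
    rw [Finset.sum_congr rfl fun l _ => step l, Finset.sum_add_distrib,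
      Finset.sum_add_distrib, ← Finset.mul_sum, hTa', hTr', hTA]
  -- E4 = TA
  have hE4 : (∑ l, (∑ k, AG l k * P k) * P l) = TA := by
    have step : ∀ l : Fin n, (∑ k, AG l k * P k) * P l
        = ∑ k, ∑ m, A l m * G m k * P k * P l := by
      intro l
      rw [Finset.sum_mul]
      refine Finset.sum_congr rfl fun k _ => ?_
      rw [hAG, Finset.sum_mul, Finset.sum_mul]
    rw [Finset.sum_congr rfl fun l _ => step l, hTA]
    conv_lhs => rw [sum3_rot, sum3_rot]
    refine Finset.sum_congr rfl fun m _ => ?_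
    rw [Finset.sum_comm]
  -- E5 = Tq
  have hE5 : (∑ ℓ, ∑ l, (∑ k, G l k * (∑ i, σ' i ℓ * Q k i)) * (∑ j, σ' j ℓ * Q l j)) = Tq := by
    have step : ∀ ℓ l : Fin n, (∑ k, G l k * (∑ i, σ' i ℓ * Q k i)) * (∑ j, σ' j ℓ * Q l j)
        = ∑ k, ∑ i, ∑ j, σ' i ℓ * σ' j ℓ * G l k * Q i k * Q j l := by
      intro ℓ l
      rw [Finset.sum_mul]
      refine Finset.sum_congr rfl fun k _ => ?_
      have expand : G l k * (∑ i, σ' i ℓ * Q k i) = ∑ i, G l k * (σ' i ℓ * Q k i) :=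
        Finset.mul_sum _ _ _
      rw [expand, Finset.sum_mul_sum]
      refine Finset.sum_congr rfl fun i _ => Finset.sum_congr rfl fun j _ => ?_
      rw [hQ k i, hQ l j]; ring
    have hTq' : Tq = ∑ i, ∑ j, ∑ l, ∑ k, ∑ ℓ, σ' i ℓ * σ' j ℓ * G l k * Q i k * Q j l := by
      rw [hTq]
      refine Finset.sum_congr rfl fun i _ => Finset.sum_congr rfl fun j _ =>
        Finset.sum_congr rfl fun l _ => Finset.sum_congr rfl fun k _ => ?_
      rw [hS]
      simp only [Finset.sum_mul]
    rw [Finset.sum_congr rfl fun ℓ _ => Finset.sum_congr rfl fun l _ => step ℓ l, hTq']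
    conv_lhs => rw [sum5_rot, sum5_rot, sum5_rot]
    exact Finset.sum_congr rfl fun i _ => Finset.sum_congr rfl fun j _ => sum3_rot _
  rw [hE1, hE2, hE3, hE4, hE5]
  ring
end algebra

section tools
variable {n : ℕ} {i j : Fin n} {f g : Vec n → ℝ} {x : Vec n}

lemma pd_smooth (hf : ContDiff ℝ (⊤ : ℕ∞) f) (i : Fin n) : ContDiff ℝ (⊤ : ℕ∞) (pd i f) := by
  have h1 : ContDiff ℝ (⊤ : ℕ∞) (fderiv ℝ f) := hf.fderiv_right (by simp)
  exact (ContinuousLinearMap.apply ℝ ℝ (Pi.single i 1 : Vec n)).contDiff.comp h1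

lemma diffAt (hf : ContDiff ℝ (⊤ : ℕ∞) f) : DifferentiableAt ℝ f x :=
  (hf.differentiable (by simp)).differentiableAt

lemma pd_mul (hf : DifferentiableAt ℝ f x) (hg : DifferentiableAt ℝ g x) :
    pd i (fun y => f y * g y) x = pd i f x * g x + f x * pd i g x := by
  unfold pd; rw [fderiv_fun_mul hf hg]; simp [mul_comm]; ring

lemma pd_add (hf : DifferentiableAt ℝ f x) (hg : DifferentiableAt ℝ g x) :
    pd i (fun y => f y + g y) x = pd i f x + pd i g x := by
  unfold pd; rw [fderiv_fun_add hf hg]; simp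

lemma pd_sum {α : Type*} (s : Finset α) (F : α → Vec n → ℝ)
    (hF : ∀ k ∈ s, DifferentiableAt ℝ (F k) x) :
    pd i (fun y => ∑ k ∈ s, F k y) x = ∑ k ∈ s, pd i (F k) x := by
  unfold pd; rw [fderiv_fun_sum hF]; simp

lemma pd_const_mul (c : ℝ) (hf : DifferentiableAt ℝ f x) :
    pd i (fun y => c * f y) x = c * pd i f x := by
  unfold pd; rw [fderiv_const_mul hf]; simp

lemma pd_comm (hf : ContDiff ℝ (⊤ : ℕ∞) f) : pd i (pd j f) x = pd j (pd i f) x := by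
  have hd : DifferentiableAt ℝ (fderiv ℝ f) x :=
    ((hf.fderiv_right (m := (⊤ : ℕ∞)) (by simp)).differentiable (by simp)) x
  have key : ∀ (a b : Fin n), pd a (pd b f) x
      = fderiv ℝ (fderiv ℝ f) x (Pi.single a 1) (Pi.single b 1) := by
    intro a b
    unfold pd
    rw [fderiv_clm_apply hd (differentiableAt_const _)]
    simp
  rw [key i j, key j i]
  exact hf.contDiffAt.isSymmSndFDerivAt (by simp only [minSmoothness_of_isRCLikeNormedField]; exact WithTop.coe_le_coe.mpr (le_top : (2 : ℕ∞) ≤ ⊤)) _ _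

lemma mulVec_smooth (A : Mat n) (k : Fin n) : ContDiff ℝ (⊤ : ℕ∞) (fun y : Vec n => (A *ᵥ y) k) := by
  have : (fun y : Vec n => (A *ᵥ y) k) = fun y => ∑ m, A k m * y m := by
    funext y; simp [Matrix.mulVec, dotProduct]
  rw [this]
  exact ContDiff.sum fun m _ =>
    contDiff_const.mul (ContinuousLinearMap.proj m : Vec n →L[ℝ] ℝ).contDiff

lemma pd_coord (m : Fin n) : pd i (fun y : Vec n => y m) x = if m = i then 1 else 0 := by
  unfold pd
  have h : fderiv ℝ (fun y : Vec n => y m) x = (ContinuousLinearMap.proj m : Vec n →L[ℝ] ℝ) :=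
    by exact (ContinuousLinearMap.proj m : Vec n →L[ℝ] ℝ).fderiv
  rw [h]
  simp [ContinuousLinearMap.proj_apply, Pi.single_apply]

lemma pd_mulVec (A : Mat n) (k : Fin n) : pd i (fun y : Vec n => (A *ᵥ y) k) x = A k i := by
  have h : (fun y : Vec n => (A *ᵥ y) k) = fun y => ∑ m, A k m * y m := by
    funext y; simp [Matrix.mulVec, dotProduct]
  rw [h, pd_sum Finset.univ (fun m y => A k m * y m) (fun m _ =>
    (differentiableAt_const _).mul ((ContinuousLinearMap.proj m : Vec n →L[ℝ] ℝ).differentiableAt))]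
  have : ∀ m : Fin n, pd i (fun y : Vec n => A k m * y m) x
      = A k m * (if m = i then 1 else 0) := by
    intro m
    have hd : DifferentiableAt ℝ (fun y : Vec n => y m) x := by
      exact (ContinuousLinearMap.proj m : Vec n →L[ℝ] ℝ).differentiableAt
    rw [pd_const_mul _ hd, pd_coord]
  simp [this]

lemma Gamma_apply (G : Mat n) (f g : Vec n → ℝ) (x : Vec n) :
    GammaOp G f g x = ∑ l, (∑ k, G l k * pd k f x) * pd l g x := by
  simp [GammaOp, Matrix.mulVec, dotProduct, gradV]

lemma Lop_eq (A σ : Mat n) (f : Vec n → ℝ) :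
    Lop A σ f = fun y => (∑ k, (A *ᵥ y) k * pd k f y)
      + (1/2) * ∑ i, ∑ j, (σ * σᵀ) i j * pd i (pd j f) y := by
  funext y; simp [Lop, dotProduct, gradV]

lemma pd_Gamma (hf : ContDiff ℝ (⊤ : ℕ∞) f) (G : Mat n) (i : Fin n) (x : Vec n) :
    pd i (GammaOp G f f) x
      = ∑ l, ∑ k, G l k * (pd i (pd k f) x * pd l f x + pd k f x * pd i (pd l f) x) := by
  have hrw : GammaOp G f f = fun y => ∑ l, ∑ k, G l k * (pd k f y * pd l f y) := by
    funext y
    rw [Gamma_apply]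
    refine Finset.sum_congr rfl fun l _ => ?_
    rw [Finset.sum_mul]
    exact Finset.sum_congr rfl fun k _ => by ring
  have hdiff : ∀ l k : Fin n, ∀ y : Vec n,
      DifferentiableAt ℝ (fun y => G l k * (pd k f y * pd l f y)) y :=
    fun l k y => (diffAt (contDiff_const.mul ((pd_smooth hf k).mul (pd_smooth hf l))))
  rw [hrw, pd_sum Finset.univ (fun l y => ∑ k, G l k * (pd k f y * pd l f y)) (fun l _ => diffAt (ContDiff.sum fun k _ =>
    contDiff_const.mul ((pd_smooth hf k).mul (pd_smooth hf l))))]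
  refine Finset.sum_congr rfl fun l _ => ?_
  rw [pd_sum Finset.univ _ (fun k _ => hdiff l k x)]
  refine Finset.sum_congr rfl fun k _ => ?_
  rw [pd_const_mul _ (diffAt ((pd_smooth hf k).mul (pd_smooth hf l))),
    pd_mul (diffAt (pd_smooth hf k)) (diffAt (pd_smooth hf l))]

lemma pd_pd_Gamma (hf : ContDiff ℝ (⊤ : ℕ∞) f) (G : Mat n) (i j : Fin n) (x : Vec n) :
    pd i (pd j (GammaOp G f f)) x
      = ∑ l, ∑ k, G l k *
          ((pd i (pd j (pd k f)) x * pd l f x + pd j (pd k f) x * pd i (pd l f) x)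
            + (pd i (pd k f) x * pd j (pd l f) x + pd k f x * pd i (pd j (pd l f)) x)) := by
  have hrw : pd j (GammaOp G f f)
      = fun y => ∑ l, ∑ k, G l k * (pd j (pd k f) y * pd l f y + pd k f y * pd j (pd l f) y) :=
    funext fun y => pd_Gamma hf G j y
  have s0 : ∀ a : Fin n, ContDiff ℝ (⊤ : ℕ∞) (pd a f) := pd_smooth hf
  have s1 : ∀ a b : Fin n, ContDiff ℝ (⊤ : ℕ∞) (pd a (pd b f)) := fun a b => pd_smooth (pd_smooth hf b) a
  have hsummand : ∀ l k : Fin n, ContDiff ℝ (⊤ : ℕ∞)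
      (fun y => G l k * (pd j (pd k f) y * pd l f y + pd k f y * pd j (pd l f) y)) :=
    fun l k => contDiff_const.mul (((s1 j k).mul (s0 l)).add ((s0 k).mul (s1 j l)))
  rw [hrw, pd_sum Finset.univ _ (fun l _ => diffAt (ContDiff.sum fun k _ => hsummand l k))]
  refine Finset.sum_congr rfl fun l _ => ?_
  rw [pd_sum Finset.univ _ (fun k _ => diffAt (hsummand l k))]
  refine Finset.sum_congr rfl fun k _ => ?_
  rw [pd_const_mul _ (diffAt (((s1 j k).mul (s0 l)).add ((s0 k).mul (s1 j l)))),
    pd_add (diffAt ((s1 j k).mul (s0 l))) (diffAt ((s0 k).mul (s1 j l))),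
    pd_mul (diffAt (s1 j k)) (diffAt (s0 l)),
    pd_mul (diffAt (s0 k)) (diffAt (s1 j l))]

lemma pd_Lop {A σ : Mat n} (hf : ContDiff ℝ (⊤ : ℕ∞) f) (l : Fin n) (x : Vec n) :
    pd l (Lop A σ f) x
      = (∑ k, (A k l * pd k f x + (A *ᵥ x) k * pd l (pd k f) x))
        + (1/2) * ∑ i, ∑ j, (σ * σᵀ) i j * pd l (pd i (pd j f)) x := by
  have s0 : ∀ a : Fin n, ContDiff ℝ (⊤ : ℕ∞) (pd a f) := pd_smooth hf
  have s1 : ∀ a b : Fin n, ContDiff ℝ (⊤ : ℕ∞) (pd a (pd b f)) := fun a b => pd_smooth (pd_smooth hf b) a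
  have h1 : ∀ k : Fin n, ContDiff ℝ (⊤ : ℕ∞) (fun y => (A *ᵥ y) k * pd k f y) :=
    fun k => (mulVec_smooth A k).mul (s0 k)
  have hpart1 : ContDiff ℝ (⊤ : ℕ∞) (fun y => ∑ k, (A *ᵥ y) k * pd k f y) :=
    ContDiff.sum fun k _ => h1 k
  have hpart2 : ContDiff ℝ (⊤ : ℕ∞)
      (fun y => (1/2 : ℝ) * ∑ i, ∑ j, (σ * σᵀ) i j * pd i (pd j f) y) :=
    contDiff_const.mul (ContDiff.sum fun i _ => ContDiff.sum fun j _ =>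
      contDiff_const.mul (s1 i j))
  rw [Lop_eq, pd_add (diffAt hpart1) (diffAt hpart2)]
  congr 1
  · rw [pd_sum Finset.univ _ (fun k _ => diffAt (h1 k))]
    refine Finset.sum_congr rfl fun k _ => ?_
    rw [pd_mul (diffAt (mulVec_smooth A k)) (diffAt (s0 k)), pd_mulVec]
  · rw [pd_const_mul (f := fun y => ∑ i, ∑ j, (σ * σᵀ) i j * pd i (pd j f) y) _ (diffAt (ContDiff.sum fun i _ => ContDiff.sum fun j _ =>
      contDiff_const.mul (s1 i j)))]
    congr 1
    rw [pd_sum Finset.univ (fun i y => ∑ j, (σ * σᵀ) i j * pd i (pd j f) y) (fun i _ => diffAt (ContDiff.sum fun j _ =>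
      contDiff_const.mul (s1 i j)))]
    refine Finset.sum_congr rfl fun i _ => ?_
    rw [pd_sum Finset.univ _ (fun j _ => diffAt (contDiff_const.mul (s1 i j)))]
    refine Finset.sum_congr rfl fun j _ => ?_
    rw [pd_const_mul _ (diffAt (s1 i j))]

lemma pd_sigmaT {σ : Mat n} (hf : ContDiff ℝ (⊤ : ℕ∞) f) (ℓ k : Fin n) (x : Vec n) :
    pd k (fun y => (σᵀ *ᵥ gradV f y) ℓ) x = ∑ i, σ i ℓ * pd k (pd i f) x := by
  have hrw : (fun y => (σᵀ *ᵥ gradV f y) ℓ) = fun y => ∑ i, σ i ℓ * pd i f y := by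
    funext y; simp [Matrix.mulVec, dotProduct, gradV, Matrix.transpose_apply]
  have s0 : ∀ a : Fin n, ContDiff ℝ (⊤ : ℕ∞) (pd a f) := pd_smooth hf
  rw [hrw, pd_sum Finset.univ _ (fun i _ => diffAt (contDiff_const.mul (s0 i)))]
  exact Finset.sum_congr rfl fun i _ => pd_const_mul _ (diffAt (s0 i))
end tools

/-- For a symmetric G,
Γ₂^G(f) = −Γ^{AG}(f) + ½ Σ_ℓ Γ^G((σᵀ∇f)_ℓ) for all f ∈ C^∞(ℝⁿ), and if moreover
G is positive semidefinite then Γ₂^G(f) ≥ −Γ^{AG}(f). -/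
theorem stmt_1 {n : ℕ} (A σ G : Mat n) (hG : G.IsSymm) :
    (∀ f : Vec n → ℝ, ContDiff ℝ (⊤ : ℕ∞) f → ∀ x : Vec n,
      Gamma2Op A σ G f x =
        - GammaOp (A * G) f f x
          + (1/2) * ∑ ℓ : Fin n,
              GammaOp G (fun y => (σᵀ *ᵥ gradV f y) ℓ) (fun y => (σᵀ *ᵥ gradV f y) ℓ) x) ∧
    (G.PosSemidef → ∀ f : Vec n → ℝ, ContDiff ℝ (⊤ : ℕ∞) f → ∀ x : Vec n,
      Gamma2Op A σ G f x ≥ - GammaOp (A * G) f f x) := by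
  have main : ∀ f : Vec n → ℝ, ContDiff ℝ (⊤ : ℕ∞) f → ∀ x : Vec n,
      Gamma2Op A σ G f x =
        - GammaOp (A * G) f f x
          + (1/2) * ∑ ℓ : Fin n,
              GammaOp G (fun y => (σᵀ *ᵥ gradV f y) ℓ) (fun y => (σᵀ *ᵥ gradV f y) ℓ) x := by
    intro f hf x
    have hGsym : ∀ k l : Fin n, G k l = G l k := fun k l => by
      have h := congrFun (congrFun hG k) l
      simpa [Matrix.transpose_apply] using h.symm
    have hQsym : ∀ k l : Fin n, pd k (pd l f) x = pd l (pd k f) x := fun k l => pd_comm hf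
    have hR1 : ∀ i k l : Fin n, pd i (pd k (pd l f)) x = pd k (pd i (pd l f)) x :=
      fun i k l => pd_comm (pd_smooth hf l)
    have hR2 : ∀ i k l : Fin n, pd i (pd k (pd l f)) x = pd i (pd l (pd k f)) x := by
      intro i k l
      have hfun : pd k (pd l f) = pd l (pd k f) := funext fun y => pd_comm hf
      rw [hfun]
    have hS : ∀ i j : Fin n, (σ * σᵀ) i j = ∑ ℓ, σ i ℓ * σ j ℓ := fun i j => by
      simp [Matrix.mul_apply, Matrix.transpose_apply]
    have hAG : ∀ l k : Fin n, (A * G) l k = ∑ m, A l m * G m k := fun l k =>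
      Matrix.mul_apply
    have key := key_alg G A (σ * σᵀ) (A * G) σ (fun i => (A *ᵥ x) i) (fun k => pd k f x)
      (fun k l => pd k (pd l f) x) (fun i k l => pd i (pd k (pd l f)) x)
      hGsym hQsym hR1 hR2 hS hAG
    have lhs_eq : Gamma2Op A σ G f x
        = (1/2) * ((∑ i, (A *ᵥ x) i *
              (∑ l, ∑ k, G l k * (pd i (pd k f) x * pd l f x + pd k f x * pd i (pd l f) x)))
            + (1/2) * ∑ i, ∑ j, (σ * σᵀ) i j *
                (∑ l, ∑ k, G l k *
                  ((pd i (pd j (pd k f)) x * pd l f x + pd j (pd k f) x * pd i (pd l f) x)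
                    + (pd i (pd k f) x * pd j (pd l f) x + pd k f x * pd i (pd j (pd l f)) x))))
          - ∑ l, (∑ k, G l k * pd k f x) *
              ((∑ k, (A k l * pd k f x + (A *ᵥ x) k * pd l (pd k f) x))
                + (1/2) * ∑ i, ∑ j, (σ * σᵀ) i j * pd l (pd i (pd j f)) x) := by
      unfold Gamma2Op
      rw [congrFun (Lop_eq A σ (GammaOp G f f)) x, Gamma_apply]
      congr 1
      · congr 2
        · exact Finset.sum_congr rfl fun i _ => by rw [pd_Gamma hf G i x]
        · congr 1
          exact Finset.sum_congr rfl fun i _ => Finset.sum_congr rfl fun j _ => by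
            rw [pd_pd_Gamma hf G i j x]
      · exact Finset.sum_congr rfl fun l _ => by rw [pd_Lop hf l x]
    have rhs_eq : - GammaOp (A * G) f f x
          + (1/2) * ∑ ℓ : Fin n,
              GammaOp G (fun y => (σᵀ *ᵥ gradV f y) ℓ) (fun y => (σᵀ *ᵥ gradV f y) ℓ) x
        = - ∑ l, (∑ k, (A * G) l k * pd k f x) * pd l f x
          + (1/2) * ∑ ℓ, ∑ l, (∑ k, G l k * (∑ i, σ i ℓ * pd k (pd i f) x))
              * (∑ j, σ j ℓ * pd l (pd j f) x) := by
      have hGam : ∀ ℓ : Fin n,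
          GammaOp G (fun y => (σᵀ *ᵥ gradV f y) ℓ) (fun y => (σᵀ *ᵥ gradV f y) ℓ) x
            = ∑ l, (∑ k, G l k * (∑ i, σ i ℓ * pd k (pd i f) x))
                * (∑ j, σ j ℓ * pd l (pd j f) x) := by
        intro ℓ
        rw [Gamma_apply]
        refine Finset.sum_congr rfl fun l _ => ?_
        rw [pd_sigmaT hf ℓ l x]
        congr 1
        exact Finset.sum_congr rfl fun k _ => by rw [pd_sigmaT hf ℓ k x]
      rw [Gamma_apply (A * G) f f x, Finset.sum_congr rfl fun ℓ _ => hGam ℓ]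
    rw [lhs_eq, rhs_eq]
    exact key
  refine ⟨main, fun hpsd f hf x => ?_⟩
  rw [main f hf x]
  have h0 : 0 ≤ ∑ ℓ : Fin n,
      GammaOp G (fun y => (σᵀ *ᵥ gradV f y) ℓ) (fun y => (σᵀ *ᵥ gradV f y) ℓ) x := by
    refine Finset.sum_nonneg fun ℓ _ => ?_
    have h := hpsd.dotProduct_mulVec_nonneg (gradV (fun y => (σᵀ *ᵥ gradV f y) ℓ) x)
    unfold GammaOp
    rw [dotProduct_comm]
    simpa using h
  linarith
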